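/- Let C_N be the cycle graph on N ≥ 3 vertices. For every real weight function w on its edges whose total weight is W = 1, the second smallest eigenvalue of the weighted graph Laplacian satisfies λ_2(L_G(w)) ≤ 2(1 − cos(2π/N))/N, with equality when every edge carries the weight 1/N. Consequently, the optimal SLEM of the fastest discrete-time quantum consensus problem on the cycle in the case N = d²+1 equals (N − 2(1 − cos(2π/N)))/N, attained at uniform edge weight 1/N. -/

import Mathlib

open Matrix Finset

attribute [local instance] Classical.propDecidable

/-- The weighted graph Laplacian of a simple graph on `Fin N`. -/
noncomputable def graphLap (N : ℕ) (G : SimpleGraph (Fin N)) (w : Fin N → Fin N → ℝ) :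
    Matrix (Fin N) (Fin N) ℝ :=
  Matrix.of fun i j =>
    if i = j then ∑ k, (if G.Adj i k then w i k else 0)
    else if G.Adj i j then -w i j else 0

/-- Total weight of a weighted graph on `Fin N`. -/
noncomputable def totalW (N : ℕ) (G : SimpleGraph (Fin N)) (w : Fin N → Fin N → ℝ) : ℝ :=
  ∑ i, ∑ j, if i < j ∧ G.Adj i j then w i j else 0

/-- Multiset of eigenvalues (with multiplicity) of a real symmetric matrix. -/
noncomputable def eigs {m : Type*} [Fintype m] [DecidableEq m] (M : Matrix m m ℝ) : Multiset ℝ :=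
  if h : M.IsHermitian then Finset.univ.val.map h.eigenvalues else 0

/-- The second smallest eigenvalue (with multiplicity) of a real symmetric matrix. -/
noncomputable def lambda2 {m : Type*} [Fintype m] [DecidableEq m] (M : Matrix m m ℝ) : ℝ :=
  ((eigs M).sort (· ≤ ·)).getD 1 0

/-- The cycle graph on `Fin N`, with edges `{i, i+1 mod N}`. -/
def cycleGraph (N : ℕ) : SimpleGraph (Fin N) :=
  SimpleGraph.fromRel (fun i j => (j : ℕ) = ((i : ℕ) + 1) % N)

/-!
Upper bound: since `L 1 = 0`, Courant–Fischer on the plane spanned by `1` and any nonzero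
`x ⊥ 1` gives `λ₂ ≤ xᵀLx / ‖x‖²`. With `ζ = exp(2πi/N)`, the real and imaginary parts `x, y` of
`k ↦ ζ^k` are orthogonal to `1`, `‖x‖² + ‖y‖² = N`, and every edge contributes
`|ζ^k - ζ^(k+1)|² = 2 - 2 cos(2π/N)`, so `xᵀLx + yᵀLy = 2(1 - cos(2π/N)) W`; one of `x, y`
therefore has Rayleigh quotient at most `2(1 - cos(2π/N))/N`.

Lower bound at the uniform weight `1/N`: the discrete Fourier transform turns the difference
`v k - v (k+1)` into multiplication by `ζ^j - 1`, so Parseval gives the discrete Wirtinger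
inequality `∑ (v k - v (k+1))² ≥ 2(1 - cos(2π/N)) ∑ v k²` for `v ⊥ 1`.
-/

open scoped Real

lemma exists_ne_zero_mul_add_mul_eq_zero (p q : ℝ) :
    ∃ a b : ℝ, (a ≠ 0 ∨ b ≠ 0) ∧ a * p + b * q = 0 := by
  by_cases hp : p = 0
  · exact ⟨1, 0, Or.inl one_ne_zero, by simp [hp]⟩
  · exact ⟨q, -p, Or.inr (neg_ne_zero.2 hp), by ring⟩

namespace List

variable {l : List ℝ} {t : ℝ}

lemma getD_one_le_of_one_lt_countP (hl : l.Pairwise (· ≤ ·))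
    (h : 1 < l.countP (· ≤ t)) : l.getD 1 0 ≤ t := by
  match l, hl, h with
  | [], _, h => simp at h
  | [_], _, h => simp at h; split at h <;> omega
  | a :: b :: r, hl, h =>
    change b ≤ t
    by_contra! hbt
    have hr : (b :: r).countP (· ≤ t) = 0 := by
      refine countP_eq_zero.2 fun x hx => ?_
      have hbx : b ≤ x := by
        rcases mem_cons.1 hx with rfl | hx
        · exact le_rfl
        · exact rel_of_pairwise_cons hl.of_cons hx
      simpa using hbt.trans_le hbx
    rw [countP_cons, hr] at h
    split at h <;> omega

lemma le_getD_one_of_countP_le_one (hl : l.Pairwise (· ≤ ·)) (hlen : 2 ≤ l.length)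
    (h : l.countP (· < t) ≤ 1) : t ≤ l.getD 1 0 := by
  match l, hl, hlen, h with
  | a :: b :: r, hl, _, h =>
    change t ≤ b
    by_contra! hbt
    have hat : a < t := (rel_of_pairwise_cons hl mem_cons_self).trans_lt hbt
    simp only [countP_cons, hat, hbt, decide_true, if_true] at h
    omega

end List

lemma OrthonormalBasis.dotProduct_eq_sum_repr {n : Type*} [Fintype n]
    (B : OrthonormalBasis n ℝ (EuclideanSpace ℝ n)) (v w : n → ℝ) :
    v ⬝ᵥ w = ∑ i, B.repr (WithLp.toLp 2 v) i * B.repr (WithLp.toLp 2 w) i := by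
  have h := B.repr.inner_map_map (WithLp.toLp 2 v) (WithLp.toLp 2 w)
  rw [PiLp.inner_apply, EuclideanSpace.inner_toLp_toLp, star_trivial, dotProduct_comm] at h
  simpa [mul_comm] using h.symm

namespace Matrix.IsHermitian

variable {n : Type*} [Fintype n] {A : Matrix n n ℝ} {t : ℝ}

lemma dotProduct_mulVec_comm (hA : A.IsHermitian) (u v : n → ℝ) :
    u ⬝ᵥ (A *ᵥ v) = (A *ᵥ u) ⬝ᵥ v := by
  rw [dotProduct_mulVec, ← mulVec_transpose, ← conjTranspose_eq_transpose_of_trivial, hA.eq]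

variable [DecidableEq n]

lemma eigs_eq (hA : A.IsHermitian) : eigs A = Finset.univ.val.map hA.eigenvalues := by
  rw [eigs, dif_pos hA]

lemma lambda2_le_of_one_lt_card (hA : A.IsHermitian) (h : 1 < #{i | hA.eigenvalues i ≤ t}) :
    lambda2 A ≤ t := by
  apply List.getD_one_le_of_one_lt_countP (Multiset.pairwise_sort _ _)
  rwa [← Multiset.coe_countP, Multiset.sort_eq, hA.eigs_eq, Multiset.countP_map]

lemma le_lambda2_of_card_le_one (hA : A.IsHermitian) (hn : 2 ≤ Fintype.card n)
    (h : #{i | hA.eigenvalues i < t} ≤ 1) : t ≤ lambda2 A := by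
  apply List.le_getD_one_of_countP_le_one (Multiset.pairwise_sort _ _)
  · rwa [Multiset.length_sort, hA.eigs_eq, Multiset.card_map]
  · rwa [← Multiset.coe_countP, Multiset.sort_eq, hA.eigs_eq, Multiset.countP_map]

lemma eigenvectorBasis_repr_mulVec (hA : A.IsHermitian) (v : n → ℝ) (i : n) :
    hA.eigenvectorBasis.repr (WithLp.toLp 2 (A *ᵥ v)) i =
      hA.eigenvalues i * hA.eigenvectorBasis.repr (WithLp.toLp 2 v) i := by
  simp only [OrthonormalBasis.repr_apply_apply, EuclideanSpace.inner_eq_star_dotProduct,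
    star_trivial]
  rw [dotProduct_comm, hA.dotProduct_mulVec_comm, hA.mulVec_eigenvectorBasis, smul_dotProduct,
    smul_eq_mul, dotProduct_comm]

lemma dotProduct_mulVec_sub_mul_dotProduct (hA : A.IsHermitian) (v : n → ℝ) (t : ℝ) :
    v ⬝ᵥ (A *ᵥ v) - t * (v ⬝ᵥ v) =
      ∑ i, (hA.eigenvalues i - t) * hA.eigenvectorBasis.repr (WithLp.toLp 2 v) i ^ 2 := by
  simp only [hA.eigenvectorBasis.dotProduct_eq_sum_repr v, hA.eigenvectorBasis_repr_mulVec,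
    Finset.mul_sum, ← Finset.sum_sub_distrib]
  exact Finset.sum_congr rfl fun i _ => by ring

lemma exists_ne_eigenvalues_le (hA : A.IsHermitian) {v : n → ℝ} (hv : v ≠ 0) {i₀ : n}
    (hv₀ : hA.eigenvectorBasis.repr (WithLp.toLp 2 v) i₀ = 0)
    (hvt : v ⬝ᵥ (A *ᵥ v) ≤ t * (v ⬝ᵥ v)) : ∃ i ≠ i₀, hA.eigenvalues i ≤ t := by
  set c := hA.eigenvectorBasis.repr (WithLp.toLp 2 v)
  by_contra! hgt
  obtain ⟨i, hi⟩ : ∃ i, c i ≠ 0 := by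
    by_contra! hc
    exact hv (by simpa [c] using (PiLp.ext (by simpa using hc) : c = 0))
  have hii₀ : i ≠ i₀ := by rintro rfl; exact hi hv₀
  have hpos : 0 < ∑ i, (hA.eigenvalues i - t) * c i ^ 2 := by
    refine Finset.sum_pos' (fun j _ => ?_) ⟨i, Finset.mem_univ _, ?_⟩
    · rcases eq_or_ne j i₀ with rfl | hj
      · simp [hv₀]
      · exact mul_nonneg (sub_nonneg.2 (hgt j hj).le) (sq_nonneg _)
    · exact mul_pos (sub_pos.2 (hgt i hii₀)) (by positivity)
  rw [← hA.dotProduct_mulVec_sub_mul_dotProduct] at hpos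
  linarith

lemma lambda2_le_of_orthogonal (hA : A.IsHermitian) {u x : n → ℝ} (hu : u ≠ 0) (hx : x ≠ 0)
    (hux : u ⬝ᵥ x = 0)
    (h : ∀ a b : ℝ, (a • u + b • x) ⬝ᵥ (A *ᵥ (a • u + b • x)) ≤
      t * ((a • u + b • x) ⬝ᵥ (a • u + b • x))) :
    lambda2 A ≤ t := by
  have hne : ∀ i₀, ∃ i ≠ i₀, hA.eigenvalues i ≤ t := by
    intro i₀
    -- test `h` on the vector of the plane orthogonal to the `i₀`-th eigenvector
    set B := hA.eigenvectorBasis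
    obtain ⟨a, b, hab, h₀⟩ := exists_ne_zero_mul_add_mul_eq_zero
      (B.repr (WithLp.toLp 2 u) i₀) (B.repr (WithLp.toLp 2 x) i₀)
    refine hA.exists_ne_eigenvalues_le (v := a • u + b • x) ?_ ?_ (h a b)
    · intro hz
      have ha : a * (u ⬝ᵥ u) = 0 := by simpa [hux] using congrArg (u ⬝ᵥ ·) hz
      have hb : b * (x ⬝ᵥ x) = 0 := by
        simpa [dotProduct_comm x u, hux] using congrArg (x ⬝ᵥ ·) hz
      simp_all
    · simpa [B] using h₀
  obtain ⟨i₀, -⟩ := Function.ne_iff.1 hu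
  obtain ⟨i₁, -, hi₁⟩ := hne i₀
  obtain ⟨i₂, hi₂₁, hi₂⟩ := hne i₁
  exact hA.lambda2_le_of_one_lt_card
    (Finset.one_lt_card.2 ⟨i₁, by simpa using hi₁, i₂, by simpa using hi₂, hi₂₁.symm⟩)

lemma le_lambda2_of_orthogonal (hA : A.IsHermitian) (hn : 2 ≤ Fintype.card n) (u : n → ℝ)
    (h : ∀ v : n → ℝ, u ⬝ᵥ v = 0 → t * (v ⬝ᵥ v) ≤ v ⬝ᵥ (A *ᵥ v)) :
    t ≤ lambda2 A := by
  refine hA.le_lambda2_of_card_le_one hn (Finset.card_le_one.2 fun i hi j hj => ?_)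
  by_contra hij
  simp only [Finset.mem_filter, Finset.mem_univ, true_and] at hi hj
  set B := hA.eigenvectorBasis
  obtain ⟨a, b, hab, h₀⟩ := exists_ne_zero_mul_add_mul_eq_zero
    (B.repr (WithLp.toLp 2 u) i) (B.repr (WithLp.toLp 2 u) j)
  -- `v` has eigen-coordinates `c`: it lies in the span of the `i`-th and `j`-th eigenvectors
  set c : n → ℝ := Pi.single i a + Pi.single j b
  have hci : c i = a := by simp [c, Ne.symm hij]
  have hcj : c j = b := by simp [c, hij]
  have hc₀ : ∀ k, k ≠ i ∧ k ≠ j → c k = 0 := fun k hk => by simp [c, hk.1, hk.2]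
  obtain ⟨v, hv⟩ : ∃ v : n → ℝ, B.repr (WithLp.toLp 2 v) = WithLp.toLp 2 c :=
    ⟨WithLp.ofLp (B.repr.symm (WithLp.toLp 2 c)), by simp⟩
  have huv : u ⬝ᵥ v = 0 := by
    rw [B.dotProduct_eq_sum_repr, hv, Fintype.sum_eq_add i j hij fun k hk => by simp [hc₀ k hk]]
    simp only [hci, hcj]
    linarith
  have hneg : v ⬝ᵥ (A *ᵥ v) - t * (v ⬝ᵥ v) < 0 := by
    rw [hA.dotProduct_mulVec_sub_mul_dotProduct, hv,
      Fintype.sum_eq_add i j hij fun k hk => by simp [hc₀ k hk]]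
    simp only [hci, hcj]
    rcases hab with ha | hb
    · nlinarith [sq_pos_of_ne_zero ha, sq_nonneg b]
    · nlinarith [sq_pos_of_ne_zero hb, sq_nonneg a]
  linarith [h v huv]

lemma lambda2_le_of_mulVec_eq_zero (hA : A.IsHermitian) {u x : n → ℝ} (hu : u ≠ 0)
    (hAu : A *ᵥ u = 0) (hx : x ≠ 0) (hux : u ⬝ᵥ x = 0) (ht : 0 ≤ t)
    (hxt : x ⬝ᵥ (A *ᵥ x) ≤ t * (x ⬝ᵥ x)) : lambda2 A ≤ t := by
  refine hA.lambda2_le_of_orthogonal hu hx hux fun a b => ?_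
  have huAx : u ⬝ᵥ (A *ᵥ x) = 0 := by rw [hA.dotProduct_mulVec_comm, hAu, zero_dotProduct]
  have hQ : (a • u + b • x) ⬝ᵥ (A *ᵥ (a • u + b • x)) = b ^ 2 * (x ⬝ᵥ (A *ᵥ x)) := by
    simp only [mulVec_add, mulVec_smul, hAu, smul_zero, zero_add, dotProduct_smul,
      add_dotProduct, smul_dotProduct, huAx, smul_eq_mul]
    ring
  have hnorm : (a • u + b • x) ⬝ᵥ (a • u + b • x) = a ^ 2 * (u ⬝ᵥ u) + b ^ 2 * (x ⬝ᵥ x) := by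
    simp only [add_dotProduct, dotProduct_add, smul_dotProduct, dotProduct_smul,
      dotProduct_comm x u, hux, smul_eq_mul]
    ring
  have huu : 0 ≤ u ⬝ᵥ u := Finset.sum_nonneg fun i _ => mul_self_nonneg (u i)
  rw [hQ, hnorm]
  nlinarith [mul_le_mul_of_nonneg_left hxt (sq_nonneg b),
    mul_nonneg ht (mul_nonneg (sq_nonneg a) huu)]

lemma lambda2_le_of_mulVec_eq_zero_of_add (hA : A.IsHermitian) {u x y : n → ℝ} (hu : u ≠ 0)
    (hAu : A *ᵥ u = 0) (hx : x ≠ 0) (hy : y ≠ 0) (hux : u ⬝ᵥ x = 0) (huy : u ⬝ᵥ y = 0)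
    (ht : 0 ≤ t) (hxyt : x ⬝ᵥ (A *ᵥ x) + y ⬝ᵥ (A *ᵥ y) ≤ t * (x ⬝ᵥ x + y ⬝ᵥ y)) :
    lambda2 A ≤ t := by
  by_cases hxt : x ⬝ᵥ (A *ᵥ x) ≤ t * (x ⬝ᵥ x)
  · exact hA.lambda2_le_of_mulVec_eq_zero hu hAu hx hux ht hxt
  · exact hA.lambda2_le_of_mulVec_eq_zero hu hAu hy huy ht (by linarith)

end Matrix.IsHermitian

section graphLap

variable {N : ℕ} (G : SimpleGraph (Fin N)) (w : Fin N → Fin N → ℝ)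

lemma graphLap_isHermitian (hw : ∀ i j, w i j = w j i) : (graphLap N G w).IsHermitian := by
  ext i j
  by_cases h : i = j
  · subst h; rfl
  · simp [graphLap, h, Ne.symm h, G.adj_comm, hw]

lemma graphLap_mulVec_apply (v : Fin N → ℝ) (i : Fin N) :
    (graphLap N G w *ᵥ v) i = ∑ j, if G.Adj i j then w i j * (v i - v j) else 0 := by
  have hsplit : ∀ j, graphLap N G w i j =
      (if i = j then ∑ k, (if G.Adj i k then w i k else 0) else 0) +
        (if G.Adj i j then -w i j else 0) := by
    intro j
    by_cases h : i = j
    · subst h; simp [graphLap]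
    · simp [graphLap, h]
  simp_rw [mulVec, dotProduct, hsplit, add_mul, Finset.sum_add_distrib, ite_mul, zero_mul,
    Finset.sum_ite_eq, if_pos (Finset.mem_univ _), Finset.sum_mul, ← Finset.sum_add_distrib]
  exact Finset.sum_congr rfl fun j _ => by split_ifs <;> ring

lemma graphLap_mulVec_one : graphLap N G w *ᵥ 1 = 0 := by
  ext i
  simp [graphLap_mulVec_apply]

lemma two_mul_dotProduct_graphLap_mulVec (hw : ∀ i j, w i j = w j i) (v : Fin N → ℝ) :
    2 * (v ⬝ᵥ (graphLap N G w *ᵥ v)) =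
      ∑ i, ∑ j, if G.Adj i j then w i j * (v i - v j) ^ 2 else 0 := by
  have hswap : v ⬝ᵥ (graphLap N G w *ᵥ v) =
      ∑ i, ∑ j, if G.Adj i j then w i j * (v j * (v j - v i)) else 0 := by
    simp only [dotProduct, graphLap_mulVec_apply, Finset.mul_sum]
    rw [Finset.sum_comm]
    refine Finset.sum_congr rfl fun i _ => Finset.sum_congr rfl fun j _ => ?_
    simp only [G.adj_comm j i, hw j i]
    split_ifs <;> ring
  simp only [two_mul]
  nth_rw 2 [hswap]
  simp only [dotProduct, graphLap_mulVec_apply, Finset.mul_sum, ← Finset.sum_add_distrib]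
  exact Finset.sum_congr rfl fun i _ => Finset.sum_congr rfl fun j _ => by split_ifs <;> ring

lemma two_mul_totalW (hw : ∀ i j, w i j = w j i) :
    2 * totalW N G w = ∑ i, ∑ j, if G.Adj i j then w i j else 0 := by
  have hswap : totalW N G w = ∑ i, ∑ j, if j < i ∧ G.Adj i j then w i j else 0 := by
    rw [totalW, Finset.sum_comm]
    simp only [G.adj_comm, hw]
  rw [two_mul]
  nth_rw 2 [hswap]
  rw [totalW, ← Finset.sum_add_distrib]
  refine Finset.sum_congr rfl fun i _ => ?_
  rw [← Finset.sum_add_distrib]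
  refine Finset.sum_congr rfl fun j _ => ?_
  by_cases hadj : G.Adj i j
  · rcases lt_or_gt_of_ne hadj.ne with h | h <;> simp [hadj, h, h.not_gt]
  · simp [hadj]

end graphLap

section cycleGraph

variable {N : ℕ} [NeZero N]

lemma cycleGraph_adj_iff (hN : 1 < N) {i j : Fin N} :
    (cycleGraph N).Adj i j ↔ j = i + 1 ∨ j = i - 1 := by
  have hsucc : ∀ a b : Fin N, (b : ℕ) = ((a : ℕ) + 1) % N ↔ b = a + 1 := fun a b => by
    rw [Fin.ext_iff, Fin.val_add, Fin.val_one', Nat.mod_eq_of_lt hN]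
  have hne : ∀ a : Fin N, a + 1 ≠ a := fun a h => by
    simpa [Fin.ext_iff, Fin.val_one', Nat.mod_eq_of_lt hN] using
      add_eq_left.1 h
  have hpred : i = j + 1 ↔ j = i - 1 := by rw [eq_sub_iff_add_eq, eq_comm]
  rw [cycleGraph, SimpleGraph.fromRel_adj, hsucc, hsucc, hpred]
  constructor
  · exact fun h => h.2
  · rintro (rfl | rfl)
    · exact ⟨(hne i).symm, Or.inl rfl⟩
    · exact ⟨fun h => hne (i - 1) (by rwa [sub_add_cancel]), Or.inr rfl⟩

lemma Fin.add_one_ne_sub_one (hN : 3 ≤ N) (i : Fin N) : i + 1 ≠ i - 1 := by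
  intro h
  have h2 : (1 + 1 : Fin N) = 0 := by
    have := congrArg (· + 1) h
    simp only [sub_add_cancel] at this
    rwa [add_assoc, add_eq_left] at this
  rw [Fin.ext_iff, Fin.val_add, Fin.val_one', Nat.mod_eq_of_lt (by omega : 1 < N), Fin.val_zero,
    Nat.mod_eq_of_lt (by omega : 1 + 1 < N)] at h2
  omega

lemma sum_ite_adj_cycleGraph (hN : 3 ≤ N) (g : Fin N → ℝ) (i : Fin N) :
    (∑ j, if (cycleGraph N).Adj i j then g j else 0) = g (i + 1) + g (i - 1) := by
  rw [← Finset.sum_filter, Finset.sum_congr (s₂ := {i + 1, i - 1}) _ fun _ _ => rfl,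
    Finset.sum_pair (Fin.add_one_ne_sub_one hN i)]
  ext j
  simp [cycleGraph_adj_iff (by omega : 1 < N)]

lemma sum_sum_ite_adj_cycleGraph (hN : 3 ≤ N) (g : Fin N → Fin N → ℝ)
    (hg : ∀ i j, g i j = g j i) :
    (∑ i, ∑ j, if (cycleGraph N).Adj i j then g i j else 0) = 2 * ∑ k, g k (k + 1) := by
  have hback : ∑ k, g k (k - 1) = ∑ k, g k (k + 1) :=
    Fintype.sum_equiv (Equiv.subRight 1) _ _ fun k => by simp [hg k]
  simp only [sum_ite_adj_cycleGraph hN, Finset.sum_add_distrib, hback]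
  ring

lemma totalW_cycleGraph (hN : 3 ≤ N) (w : Fin N → Fin N → ℝ) (hw : ∀ i j, w i j = w j i) :
    totalW N (cycleGraph N) w = ∑ k, w k (k + 1) := by
  have h := two_mul_totalW (cycleGraph N) w hw
  rw [sum_sum_ite_adj_cycleGraph hN w hw] at h
  linarith

lemma dotProduct_graphLap_cycleGraph_mulVec (hN : 3 ≤ N) (w : Fin N → Fin N → ℝ)
    (hw : ∀ i j, w i j = w j i) (v : Fin N → ℝ) :
    v ⬝ᵥ (graphLap N (cycleGraph N) w *ᵥ v) = ∑ k, w k (k + 1) * (v k - v (k + 1)) ^ 2 := by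
  have h := two_mul_dotProduct_graphLap_mulVec (cycleGraph N) w hw v
  rw [sum_sum_ite_adj_cycleGraph hN (fun i j => w i j * (v i - v j) ^ 2)
    fun i j => by rw [hw]; ring] at h
  linarith

end cycleGraph

open Complex

lemma cos_two_pi_mul_div_le {N m : ℕ} (h1 : 1 ≤ m) (h2 : m < N) :
    Real.cos (2 * π * m / N) ≤ Real.cos (2 * π / N) := by
  have hN : (0 : ℝ) < N := by exact_mod_cast (by omega : 0 < N)
  have key : ∀ m' : ℕ, 1 ≤ m' → 2 * m' ≤ N → Real.cos (2 * π * m' / N) ≤ Real.cos (2 * π / N) := by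
    intro m' h1' h2'
    have h1'' : (1 : ℝ) ≤ m' := by exact_mod_cast h1'
    have h2'' : 2 * (m' : ℝ) ≤ N := by exact_mod_cast h2'
    apply Real.cos_le_cos_of_nonneg_of_le_pi (by positivity)
    · rw [div_le_iff₀ hN]; nlinarith [Real.pi_pos]
    · exact div_le_div_of_nonneg_right (by nlinarith [Real.pi_pos]) hN.le
  rcases le_total (2 * m) N with h | h
  · exact key m h1 h
  · have hsym : Real.cos (2 * π * m / N) = Real.cos (2 * π * ↑(N - m) / N) := by
      rw [Nat.cast_sub h2.le, ← Real.cos_neg, ← Real.cos_add_two_pi]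
      congr 1
      field_simp
      ring
    rw [hsym]
    exact key (N - m) (by omega) (by omega)

section DFT

lemma exp_two_pi_I_div_pow {N : ℕ} (m : ℕ) :
    exp (2 * π * I / N) ^ m = exp ((2 * π * m / N : ℝ) * I) := by
  rw [← exp_nat_mul]
  push_cast
  ring_nf

lemma normSq_one_sub_exp_two_pi_I_div_pow {N : ℕ} (m : ℕ) :
    normSq (1 - exp (2 * π * I / N) ^ m) = 2 - 2 * Real.cos (2 * π * m / N) := by
  rw [exp_two_pi_I_div_pow, normSq_apply, sub_re, sub_im, exp_ofReal_mul_I_re,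
    exp_ofReal_mul_I_im, one_re, one_im]
  nlinarith [Real.sin_sq_add_cos_sq (2 * π * m / N)]

noncomputable def dft {N : ℕ} (ζ : ℂ) (v : Fin N → ℝ) (j : Fin N) : ℂ :=
  ∑ k, (v k : ℂ) * (ζ ^ (j : ℕ)) ^ (k : ℕ)

variable {N : ℕ} [NeZero N] {ζ : ℂ}

lemma pow_val_add_one_of_pow_eq_one {M : Type*} [Monoid M] {ω : M} (hω : ω ^ N = 1)
    (k : Fin N) :
    ω ^ ((k + 1 : Fin N) : ℕ) = ω ^ (k : ℕ) * ω := by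
  rw [Fin.val_add, ← pow_eq_pow_mod _ hω, pow_add, Fin.val_one', ← pow_eq_pow_mod _ hω, pow_one]

lemma IsPrimitiveRoot.sum_pow_mul_conj_pow (hζ : IsPrimitiveRoot ζ N) (k l : Fin N) :
    ∑ j : Fin N, (ζ ^ (j : ℕ)) ^ (k : ℕ) * (starRingEnd ℂ) ((ζ ^ (j : ℕ)) ^ (l : ℕ)) =
      if k = l then (N : ℂ) else 0 := by
  have hζ0 : ζ ≠ 0 := hζ.ne_zero (NeZero.ne N)
  have hconj : ∀ m : ℕ, (starRingEnd ℂ) (ζ ^ m) = (ζ ^ m)⁻¹ := fun m =>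
    (inv_eq_conj (by rw [norm_pow, hζ.norm'_eq_one (NeZero.ne N), one_pow])).symm
  set μ := ζ ^ (k : ℕ) * (ζ ^ (l : ℕ))⁻¹
  have hterm : ∀ j : Fin N, (ζ ^ (j : ℕ)) ^ (k : ℕ) * (starRingEnd ℂ) ((ζ ^ (j : ℕ)) ^ (l : ℕ)) =
      μ ^ (j : ℕ) := fun j => by
    rw [← pow_mul, ← pow_mul, hconj, mul_pow, inv_pow, ← pow_mul, ← pow_mul, mul_comm (j : ℕ),
      mul_comm (j : ℕ)]
  rw [Finset.sum_congr rfl fun j _ => hterm j, Fin.sum_univ_eq_sum_range (μ ^ ·)]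
  split_ifs with hkl
  · simp [μ, hkl, hζ0]
  · have hμ : μ ≠ 1 := fun h => hkl (Fin.ext (hζ.pow_inj k.isLt l.isLt
      ((mul_inv_eq_one₀ (pow_ne_zero _ hζ0)).1 h)))
    have hμN : μ ^ N = 1 := by
      rw [mul_pow, inv_pow, ← pow_mul, ← pow_mul, mul_comm _ N, mul_comm _ N, pow_mul, pow_mul,
        hζ.pow_eq_one, one_pow, one_pow, inv_one, mul_one]
    rw [geom_sum_eq hμ, hμN, sub_self, zero_div]

lemma IsPrimitiveRoot.sum_normSq_dft (hζ : IsPrimitiveRoot ζ N) (v : Fin N → ℝ) :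
    ∑ j, normSq (dft ζ v j) = N * ∑ k, v k ^ 2 := by
  suffices h : ∑ j, dft ζ v j * (starRingEnd ℂ) (dft ζ v j) = N * ∑ k, (v k : ℂ) ^ 2 by
    simp_rw [mul_conj] at h
    exact_mod_cast h
  calc ∑ j, dft ζ v j * (starRingEnd ℂ) (dft ζ v j)
      = ∑ j : Fin N, ∑ k, ∑ l, (v k : ℂ) * v l *
          ((ζ ^ (j : ℕ)) ^ (k : ℕ) * (starRingEnd ℂ) ((ζ ^ (j : ℕ)) ^ (l : ℕ))) := by
        refine Finset.sum_congr rfl fun j _ => ?_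
        rw [dft, map_sum, Finset.sum_mul_sum]
        refine Finset.sum_congr rfl fun k _ => Finset.sum_congr rfl fun l _ => ?_
        rw [map_mul, conj_ofReal]
        ring
    _ = ∑ k, ∑ l, (v k : ℂ) * v l * ∑ j : Fin N,
          (ζ ^ (j : ℕ)) ^ (k : ℕ) * (starRingEnd ℂ) ((ζ ^ (j : ℕ)) ^ (l : ℕ)) := by
        rw [Finset.sum_comm]
        refine Finset.sum_congr rfl fun k _ => ?_
        rw [Finset.sum_comm]
        simp only [Finset.mul_sum]
    _ = N * ∑ k, (v k : ℂ) ^ 2 := by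
        simp only [hζ.sum_pow_mul_conj_pow, mul_ite, mul_zero, Finset.sum_ite_eq,
          Finset.mem_univ, if_true, Finset.mul_sum]
        exact Finset.sum_congr rfl fun k _ => by ring

lemma dft_sub_shift_mul (hζ : ζ ^ N = 1) (v : Fin N → ℝ) (j : Fin N) :
    dft ζ (fun k => v k - v (k + 1)) j * ζ ^ (j : ℕ) = (ζ ^ (j : ℕ) - 1) * dft ζ v j := by
  set ω := ζ ^ (j : ℕ)
  have hω : ω ^ N = 1 := by rw [← pow_mul, mul_comm, pow_mul, hζ, one_pow]
  have hshift : ∑ k, (v (k + 1) : ℂ) * ω ^ (k : ℕ) * ω = dft ζ v j := by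
    simp_rw [mul_assoc, ← pow_val_add_one_of_pow_eq_one hω]
    exact Fintype.sum_equiv (Equiv.addRight 1) _ _ fun k => rfl
  have hδ : dft ζ (fun k => v k - v (k + 1)) j =
      dft ζ v j - ∑ k, (v (k + 1) : ℂ) * ω ^ (k : ℕ) := by
    rw [dft, dft, ← Finset.sum_sub_distrib]
    exact Finset.sum_congr rfl fun k _ => by push_cast; ring
  rw [hδ, sub_mul, Finset.sum_mul, hshift]
  ring

lemma normSq_exp_two_pi_I_div_pow_sub_pow_val_add_one (k : Fin N) :
    normSq (exp (2 * π * I / N) ^ (k : ℕ) - exp (2 * π * I / N) ^ ((k + 1 : Fin N) : ℕ)) =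
      2 * (1 - Real.cos (2 * π / N)) := by
  have hζ := isPrimitiveRoot_exp N (NeZero.ne N)
  have h1 := normSq_one_sub_exp_two_pi_I_div_pow (N := N) 1
  rw [pow_one, Nat.cast_one, mul_one] at h1
  rw [pow_val_add_one_of_pow_eq_one hζ.pow_eq_one, ← mul_one_sub, normSq_mul, map_pow,
    normSq_eq_norm_sq, hζ.norm'_eq_one (NeZero.ne N), one_pow, one_pow, one_mul, h1]
  ring

lemma two_mul_one_sub_cos_mul_sum_sq_le (v : Fin N → ℝ) (hv : ∑ k, v k = 0) :
    2 * (1 - Real.cos (2 * π / N)) * ∑ k, v k ^ 2 ≤ ∑ k, (v k - v (k + 1)) ^ 2 := by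
  set ζ := exp (2 * π * I / N)
  have hζ : IsPrimitiveRoot ζ N := isPrimitiveRoot_exp N (NeZero.ne N)
  have hterm : ∀ j, 2 * (1 - Real.cos (2 * π / N)) * normSq (dft ζ v j) ≤
      normSq (dft ζ (fun k => v k - v (k + 1)) j) := by
    intro j
    have hmul := congrArg normSq (dft_sub_shift_mul hζ.pow_eq_one v j)
    rw [normSq_mul, normSq_mul, map_pow, normSq_eq_norm_sq ζ, hζ.norm'_eq_one (NeZero.ne N),
      one_pow, one_pow, mul_one] at hmul
    rw [hmul, ← normSq_neg (ζ ^ (j : ℕ) - 1), neg_sub, normSq_one_sub_exp_two_pi_I_div_pow]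
    rcases eq_or_ne j 0 with rfl | hj
    · have h0 : dft ζ v 0 = 0 := by simp [dft, ← ofReal_sum, hv]
      simp [h0]
    · have hcos := cos_two_pi_mul_div_le
        (Nat.one_le_iff_ne_zero.2 (Fin.val_ne_zero_iff.2 hj)) j.isLt
      nlinarith [normSq_nonneg (dft ζ v j)]
  have hN : (0 : ℝ) < N := by exact_mod_cast Nat.pos_of_neZero N
  have hsum := Finset.sum_le_sum fun j (_ : j ∈ Finset.univ) => hterm j
  rw [← Finset.mul_sum, hζ.sum_normSq_dft, hζ.sum_normSq_dft] at hsum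
  nlinarith

end DFT

variable {N : ℕ}

lemma dotProduct_graphLap_cycleGraph_mulVec_re_add_im [NeZero N] (hN : 3 ≤ N)
    (w : Fin N → Fin N → ℝ) (hw : ∀ i j, w i j = w j i) (z : Fin N → ℂ) :
    (fun k => (z k).re) ⬝ᵥ (graphLap N (cycleGraph N) w *ᵥ fun k => (z k).re) +
      (fun k => (z k).im) ⬝ᵥ (graphLap N (cycleGraph N) w *ᵥ fun k => (z k).im) =
      ∑ k, w k (k + 1) * normSq (z k - z (k + 1)) := by
  rw [dotProduct_graphLap_cycleGraph_mulVec hN w hw, dotProduct_graphLap_cycleGraph_mulVec hN w hw,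
    ← Finset.sum_add_distrib]
  exact Finset.sum_congr rfl fun k _ => by rw [normSq_apply, sub_re, sub_im]; ring

lemma lambda2_graphLap_cycleGraph_le (hN : 3 ≤ N) (w : Fin N → Fin N → ℝ)
    (hw : ∀ i j, w i j = w j i) (hW : totalW N (cycleGraph N) w = 1) :
    lambda2 (graphLap N (cycleGraph N) w) ≤ 2 * (1 - Real.cos (2 * π / N)) / N := by
  have : NeZero N := ⟨by omega⟩
  have hN' : (0 : ℝ) < N := by exact_mod_cast (by omega : 0 < N)
  set ζ := exp (2 * π * I / N)
  have hζ : IsPrimitiveRoot ζ N := isPrimitiveRoot_exp N (NeZero.ne N)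
  set x : Fin N → ℝ := fun k => (ζ ^ (k : ℕ)).re
  set y : Fin N → ℝ := fun k => (ζ ^ (k : ℕ)).im
  have hsum : ∑ k : Fin N, ζ ^ (k : ℕ) = 0 := by
    rw [Fin.sum_univ_eq_sum_range (ζ ^ ·)]
    exact hζ.geom_sum_eq_zero (by omega)
  have hx1 : 1 ⬝ᵥ x = 0 := by simpa [x, one_dotProduct, ← re_sum] using congrArg re hsum
  have hy1 : 1 ⬝ᵥ y = 0 := by simpa [y, one_dotProduct, ← im_sum] using congrArg im hsum
  have hx0 : x ≠ 0 := fun h => by simpa [x] using congrFun h 0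
  have hy0 : y ≠ 0 := fun h => by
    have hy1 := congrFun h 1
    simp only [y, Fin.val_one', Nat.mod_eq_of_lt (by omega : 1 < N), Pi.zero_apply] at hy1
    rw [(exp_two_pi_I_div_pow 1 : ζ ^ 1 = _), exp_ofReal_mul_I_im, Nat.cast_one, mul_one] at hy1
    refine (Real.sin_pos_of_pos_of_lt_pi (by positivity) ?_).ne' hy1
    rw [div_lt_iff₀ hN']
    have h3 : (3 : ℝ) ≤ N := by exact_mod_cast hN
    nlinarith [Real.pi_pos]
  refine (graphLap_isHermitian _ w hw).lambda2_le_of_mulVec_eq_zero_of_add one_ne_zero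
    (graphLap_mulVec_one _ w) hx0 hy0 hx1 hy1
    (div_nonneg (by nlinarith [Real.cos_le_one (2 * π / N)]) hN'.le) (le_of_eq ?_)
  have hnorm : x ⬝ᵥ x + y ⬝ᵥ y = N := by
    simp only [dotProduct, x, y, ← Finset.sum_add_distrib, ← normSq_apply]
    simp [normSq_eq_norm_sq, hζ.norm'_eq_one (NeZero.ne N)]
  have hedge : ∀ k : Fin N, normSq (ζ ^ (k : ℕ) - ζ ^ ((k + 1 : Fin N) : ℕ)) =
      2 * (1 - Real.cos (2 * π / N)) := normSq_exp_two_pi_I_div_pow_sub_pow_val_add_one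
  rw [dotProduct_graphLap_cycleGraph_mulVec_re_add_im hN w hw, hnorm]
  simp only [hedge, ← Finset.sum_mul, ← totalW_cycleGraph hN w hw, hW]
  field_simp

lemma totalW_cycleGraph_uniform (hN : 3 ≤ N) :
    totalW N (cycleGraph N) (fun _ _ => 1 / (N : ℝ)) = 1 := by
  have : NeZero N := ⟨by omega⟩
  rw [totalW_cycleGraph hN _ fun _ _ => rfl]
  simp

lemma le_lambda2_graphLap_cycleGraph_uniform (hN : 3 ≤ N) :
    2 * (1 - Real.cos (2 * π / N)) / N ≤
      lambda2 (graphLap N (cycleGraph N) (fun _ _ => 1 / (N : ℝ))) := by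
  have : NeZero N := ⟨by omega⟩
  have hN' : (0 : ℝ) < N := by exact_mod_cast (by omega : 0 < N)
  refine (graphLap_isHermitian _ _ fun _ _ => rfl).le_lambda2_of_orthogonal (by simp; omega) 1
    fun v hv => ?_
  have hW := two_mul_one_sub_cos_mul_sum_sq_le v (by simpa [one_dotProduct] using hv)
  rw [dotProduct_graphLap_cycleGraph_mulVec hN _ (fun _ _ => rfl), ← Finset.mul_sum]
  calc 2 * (1 - Real.cos (2 * π / N)) / N * (v ⬝ᵥ v)
      = (2 * (1 - Real.cos (2 * π / N)) * ∑ k, v k ^ 2) / N := by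
        simp only [dotProduct, sq]; ring
    _ ≤ (∑ k, (v k - v (k + 1)) ^ 2) / N := div_le_div_of_nonneg_right hW hN'.le
    _ = _ := by ring

/-- On the cycle `C_N`, among weight functions of total weight `1`, the algebraic
connectivity satisfies `λ₂ ≤ 2(1 − cos(2π/N))/N`, with equality at the uniform weight
`1/N`; consequently the optimal SLEM of the FDTQC problem in the case `N = d²+1`,
namely the infimum of `1 − λ₂` over such weights, equals `(N − 2(1 − cos(2π/N)))/N`. -/
theorem cycle_graph_optimal_slem_case_dsq_plus_one (N : ℕ) (hN : 3 ≤ N) :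
    (∀ w : Fin N → Fin N → ℝ, (∀ i j, w i j = w j i) → totalW N (cycleGraph N) w = 1 →
      lambda2 (graphLap N (cycleGraph N) w) ≤ 2 * (1 - Real.cos (2 * Real.pi / N)) / N) ∧
    totalW N (cycleGraph N) (fun _ _ => 1 / (N : ℝ)) = 1 ∧
    lambda2 (graphLap N (cycleGraph N) (fun _ _ => 1 / (N : ℝ))) =
      2 * (1 - Real.cos (2 * Real.pi / N)) / N ∧
    sInf { s : ℝ | ∃ w : Fin N → Fin N → ℝ, (∀ i j, w i j = w j i) ∧
        totalW N (cycleGraph N) w = 1 ∧ s = 1 - lambda2 (graphLap N (cycleGraph N) w) } =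
      ((N : ℝ) - 2 * (1 - Real.cos (2 * Real.pi / N))) / N := by
  have hupper := lambda2_graphLap_cycleGraph_le hN
  have huniform := le_antisymm (hupper _ (fun _ _ => rfl) (totalW_cycleGraph_uniform hN))
    (le_lambda2_graphLap_cycleGraph_uniform hN)
  refine ⟨hupper, totalW_cycleGraph_uniform hN, huniform, IsLeast.csInf_eq ⟨?_, ?_⟩⟩
  · exact ⟨_, fun _ _ => rfl, totalW_cycleGraph_uniform hN, by rw [huniform]; field_simp⟩
  · rintro s ⟨w, hw, hW, rfl⟩
    have := hupper w hw hW
    rw [sub_div, div_self (by positivity)]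
    linarith
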